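/- Let A ≥ 1 and let X be a real random variable with E[X] = 0 and |X| ≤ A almost surely, with output density f_Y(y) = (1/√(2π)) E[exp(−(y−X)²/2)] of the channel Y = X + Z, Z standard Gaussian independent of X. Suppose κ is a real number satisfying (2πe(1+A²))^{−1/2} ≤ κ ≤ (2πe)^{−1/2}. Then the number of real solutions of f_Y(y) = κ is at most a₂ A² + a₁ A + a₀ − 1, where a₂ = 9e + 6√e + 5, a₁ = 6e + 2√e, and a₀ = e + 2·log(4√e + 2) + 1. -/

import Mathlib

/-!
Extend `y ↦ √(2π) f_Y(y)` to the entire function `G(z) = E[exp(-(z - X)² / 2)]`; since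
`‖exp(-(z - x)² / 2)‖ ≤ exp((Im z)² / 2)`, it is bounded by `exp(R² / 2)` on a circle of radius `R`
centred on the real axis. As `|X| ≤ A`, `f_Y` is at most `κ / 2` outside `[-c, c]`, where
`c = A + √(1 + 2 log 2 + log(1 + A²))`, so all solutions lie in the two discs of radius `c`
centred at `±c`, where `|G - √(2π) κ| ≥ √(2π) κ / 2`. Jensen's inequality, comparing each disc with
the concentric circle of radius `√e c`, bounds the number of zeros of `G - √(2π) κ` in it by
`e c² + 2 log(4 / (√(2π) κ))`, and the lower bound on `κ` turns the sum of the two counts into the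
stated quadratic in `A`.
-/

open MeasureTheory Real Metric ComplexConjugate
open scoped Complex

theorem Set.finite_and_ncard_le_of_forall_finset {α : Type*} {s : Set α} {B : ℝ}
    (h : ∀ t : Finset α, ↑t ⊆ s → (t.card : ℝ) ≤ B) : s.Finite ∧ (s.ncard : ℝ) ≤ B := by
  have hfin : s.Finite := by
    by_contra hinf
    obtain ⟨t, hts, ht⟩ := Set.Infinite.exists_subset_card_eq hinf (⌈B⌉₊ + 1)
    have := h t hts
    rw [ht] at this
    push_cast at this
    linarith [Nat.le_ceil B]
  exact ⟨hfin, by simpa [Set.ncard_eq_toFinset_card s hfin] using h hfin.toFinset (by simp)⟩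

theorem Differentiable.exists_eq_mul_prod_sub {F : ℂ → ℂ} (hF : Differentiable ℂ F)
    {S : Finset ℂ} (hS : ∀ a ∈ S, F a = 0) :
    ∃ G : ℂ → ℂ, Differentiable ℂ G ∧ ∀ z, F z = G z * ∏ a ∈ S, (z - a) := by
  induction S using Finset.induction_on generalizing F with
  | empty => exact ⟨F, hF, by simp⟩
  | @insert a S ha ih =>
    have hFa : F a = 0 := hS a (Finset.mem_insert_self a S)
    have hdslope : Differentiable ℂ (dslope F a) := by
      rw [← differentiableOn_univ] at hF ⊢
      exact (Complex.differentiableOn_dslope Filter.univ_mem).mpr hF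
    have hfactor : ∀ z, F z = dslope F a z * (z - a) := fun z => by
      simpa [hFa, mul_comm] using (sub_smul_dslope F a z).symm
    obtain ⟨G, hG, hGF⟩ := ih hdslope fun b hb => by
      have hba : b - a ≠ 0 := sub_ne_zero.2 fun h => ha (h ▸ hb)
      have := hS b (Finset.mem_insert_of_mem hb)
      rw [hfactor b] at this
      exact (mul_eq_zero.1 this).resolve_right hba
    exact ⟨G, hG, fun z => by rw [hfactor z, hGF z, Finset.prod_insert ha]; ring⟩

theorem Complex.norm_sq_sub_conj_mul_eq {z a c : ℂ} {R : ℝ} (hz : ‖z - c‖ = R) :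
    ‖(R : ℂ) ^ 2 - conj (a - c) * (z - c)‖ = R * ‖z - a‖ := by
  have hR : (R : ℂ) ^ 2 = (z - c) * conj (z - c) := by
    rw [Complex.mul_conj, Complex.normSq_eq_norm_sq, hz]; norm_cast
  rw [hR, show (z - c) * conj (z - c) - conj (a - c) * (z - c) = (z - c) * conj (z - a) by
    simp only [map_sub]; ring, norm_mul, hz, Complex.norm_conj]

theorem Differentiable.norm_mul_pow_card_le {F : ℂ → ℂ} (hF : Differentiable ℂ F) {c : ℂ}
    {R M : ℝ} (hR : 0 < R) (hM : ∀ z, ‖z - c‖ = R → ‖F z‖ ≤ M) {S : Finset ℂ}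
    (hS : ∀ a ∈ S, F a = 0) : ‖F c‖ * R ^ S.card ≤ M * ∏ a ∈ S, ‖c - a‖ := by
  obtain ⟨G, hG, hGF⟩ := hF.exists_eq_mul_prod_sub hS
  -- replacing each factor `z - a` by `R ^ 2 - conj (a - c) * (z - c)` keeps the modulus on the
  -- circle up to the factor `R`, but makes the value at `c` as large as possible
  set H : ℂ → ℂ := fun z => G z * ∏ a ∈ S, ((R : ℂ) ^ 2 - conj (a - c) * (z - c))
  have hH : Differentiable ℂ H :=
    hG.mul <| Differentiable.fun_finsetProd fun _ _ =>
      ((differentiable_id.sub_const c).const_mul _).const_sub _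
  have hHc : ‖H c‖ = ‖G c‖ * R ^ (2 * S.card) := by
    simp [H, norm_pow, Finset.prod_const, abs_of_pos hR, pow_mul]
  have hHsphere : ∀ z, ‖z - c‖ = R → ‖H z‖ ≤ R ^ S.card * M := fun z hz => by
    simp only [H, norm_mul, norm_prod, Complex.norm_sq_sub_conj_mul_eq hz, Finset.prod_mul_distrib,
      Finset.prod_const]
    calc ‖G z‖ * (R ^ S.card * ∏ a ∈ S, ‖z - a‖) = R ^ S.card * ‖F z‖ := by
          rw [hGF z, norm_mul, norm_prod]; ring
      _ ≤ R ^ S.card * M := by gcongr; exact hM z hz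
  have hmax : ‖H c‖ ≤ R ^ S.card * M := by
    refine Complex.norm_le_of_forall_mem_frontier_norm_le isBounded_ball hH.diffContOnCl
      (fun z hz => hHsphere z ?_) (subset_closure (mem_ball_self hR))
    rwa [frontier_ball c hR.ne', mem_sphere_iff_norm] at hz
  have hRn : 0 < R ^ S.card := by positivity
  refine le_of_mul_le_mul_right ?_ hRn
  calc ‖F c‖ * R ^ S.card * R ^ S.card = ‖H c‖ * ∏ a ∈ S, ‖c - a‖ := by
        rw [hHc, hGF c, norm_mul, norm_prod]; ring
    _ ≤ R ^ S.card * M * ∏ a ∈ S, ‖c - a‖ := by gcongr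
    _ = M * (∏ a ∈ S, ‖c - a‖) * R ^ S.card := by ring

theorem Differentiable.card_le_two_mul_log {F : ℂ → ℂ} (hF : Differentiable ℂ F) {c : ℂ}
    {r M : ℝ} (hr : 0 < r) (hc : F c ≠ 0) (hM : ∀ z, ‖z - c‖ = rexp (1 / 2) * r → ‖F z‖ ≤ M)
    {S : Finset ℂ} (hS : ∀ a ∈ S, F a = 0 ∧ ‖a - c‖ ≤ r) :
    (S.card : ℝ) ≤ 2 * Real.log (M / ‖F c‖) := by
  have hjensen := hF.norm_mul_pow_card_le (by positivity) hM fun a ha => (hS a ha).1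
  have hprod : ∏ a ∈ S, ‖c - a‖ ≤ r ^ S.card := by
    rw [← Finset.prod_const]
    exact Finset.prod_le_prod (fun _ _ => norm_nonneg _) fun a ha => norm_sub_rev c a ▸ (hS a ha).2
  have hFc : 0 < ‖F c‖ := norm_pos_iff.2 hc
  have hM0 : 0 ≤ M := (norm_nonneg _).trans <| hM (c + ↑(rexp (1 / 2) * r)) <| by
    rw [add_sub_cancel_left, Complex.norm_real, Real.norm_of_nonneg (by positivity)]
  have hexp : ‖F c‖ * rexp (S.card / 2) ≤ M := by
    refine le_of_mul_le_mul_right ?_ (pow_pos hr S.card)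
    calc ‖F c‖ * rexp (S.card / 2) * r ^ S.card = ‖F c‖ * (rexp (1 / 2) * r) ^ S.card := by
          rw [mul_pow, ← Real.exp_nat_mul]; ring_nf
      _ ≤ M * ∏ a ∈ S, ‖c - a‖ := hjensen
      _ ≤ M * r ^ S.card := by gcongr
  have hMpos : 0 < M / ‖F c‖ := div_pos ((mul_pos hFc (Real.exp_pos _)).trans_le hexp) hFc
  have := (Real.le_log_iff_exp_le hMpos).2 ((le_div_iff₀' hFc).2 hexp)
  linarith

theorem Complex.norm_exp_neg_sub_sq_div_two (z : ℂ) (x : ℝ) :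
    ‖cexp (-(z - x) ^ 2 / 2)‖ = rexp ((z.im ^ 2 - (z.re - x) ^ 2) / 2) := by
  rw [Complex.norm_exp]
  congr 1
  simp [pow_two]

theorem Complex.norm_exp_neg_sub_sq_div_two_le (z : ℂ) (x : ℝ) :
    ‖cexp (-(z - x) ^ 2 / 2)‖ ≤ rexp (z.im ^ 2 / 2) := by
  rw [Complex.norm_exp_neg_sub_sq_div_two]
  gcongr
  nlinarith [sq_nonneg (z.re - x)]

section GaussianConvolution

variable {Ω : Type*} [MeasurableSpace Ω] {μ : Measure Ω} {X : Ω → ℝ} {A : ℝ}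

variable (μ X) in
/-- The entire extension of `y ↦ √(2π) f_Y(y)`. -/
noncomputable def gaussianConv (z : ℂ) : ℂ :=
  ∫ ω, cexp (-(z - X ω) ^ 2 / 2) ∂μ

theorem gaussianConv_ofReal (y : ℝ) :
    gaussianConv μ X y = ↑(∫ ω, rexp (-(y - X ω) ^ 2 / 2) ∂μ) := by
  rw [gaussianConv, ← integral_complex_ofReal]
  congr 1 with ω
  push_cast
  ring_nf

theorem norm_gaussianConv_le [IsProbabilityMeasure μ] (z : ℂ) :
    ‖gaussianConv μ X z‖ ≤ rexp (z.im ^ 2 / 2) := by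
  simpa [gaussianConv] using norm_integral_le_of_norm_le_const (μ := μ)
    (.of_forall fun ω => Complex.norm_exp_neg_sub_sq_div_two_le z (X ω))

theorem differentiable_gaussianConv [IsFiniteMeasure μ] (hX : Measurable X)
    (hbd : ∀ᵐ ω ∂μ, |X ω| ≤ A) : Differentiable ℂ (gaussianConv μ X) := by
  intro z₀
  have hmeas : ∀ f : ℝ → ℂ, Continuous f → AEStronglyMeasurable (fun ω => f (X ω)) μ :=
    fun f hf => (hf.measurable.comp hX).aestronglyMeasurable
  have hFmeas : ∀ z : ℂ, AEStronglyMeasurable (fun ω => cexp (-(z - X ω) ^ 2 / 2)) μ :=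
    fun z => hmeas (fun x : ℝ => cexp (-(z - x) ^ 2 / 2)) (by fun_prop)
  have hF'meas : AEStronglyMeasurable (fun ω => -(z₀ - X ω) * cexp (-(z₀ - X ω) ^ 2 / 2)) μ :=
    hmeas (fun x : ℝ => -(z₀ - x) * cexp (-(z₀ - x) ^ 2 / 2)) (by fun_prop)
  have hFint : Integrable (fun ω => cexp (-(z₀ - X ω) ^ 2 / 2)) μ :=
    .mono' (integrable_const (rexp (z₀.im ^ 2 / 2))) (hFmeas z₀)
      (.of_forall fun ω => Complex.norm_exp_neg_sub_sq_div_two_le z₀ (X ω))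
  have hball : ∀ z ∈ ball z₀ 1, ‖z‖ ≤ ‖z₀‖ + 1 := fun z hz =>
    (norm_le_norm_add_norm_sub' z z₀).trans (by rw [mem_ball, dist_eq_norm] at hz; linarith)
  have hF'bound : ∀ᵐ ω ∂μ, ∀ z ∈ ball z₀ 1,
      ‖-(z - X ω) * cexp (-(z - X ω) ^ 2 / 2)‖ ≤ (‖z₀‖ + 1 + A) * rexp ((‖z₀‖ + 1) ^ 2 / 2) := by
    filter_upwards [hbd] with ω hω z hz
    rw [norm_mul, norm_neg]
    refine mul_le_mul ?_ ?_ (norm_nonneg _) (by linarith [abs_nonneg (X ω), norm_nonneg z₀])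
    · calc ‖z - X ω‖ ≤ ‖z‖ + ‖(X ω : ℂ)‖ := norm_sub_le _ _
        _ ≤ ‖z₀‖ + 1 + A := by rw [Complex.norm_real, norm_eq_abs]; linarith [hball z hz]
    · have him : z.im ^ 2 ≤ (‖z₀‖ + 1) ^ 2 := sq_le_sq.2 <| by
        rw [abs_of_nonneg (by positivity : (0 : ℝ) ≤ ‖z₀‖ + 1)]
        exact (Complex.abs_im_le_norm z).trans (hball z hz)
      exact (Complex.norm_exp_neg_sub_sq_div_two_le z (X ω)).trans (exp_le_exp.2 (by linarith))
  have hderiv : ∀ᵐ ω ∂μ, ∀ z ∈ ball z₀ 1, HasDerivAt (fun z => cexp (-(z - X ω) ^ 2 / 2))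
      (-(z - X ω) * cexp (-(z - X ω) ^ 2 / 2)) z := .of_forall fun ω z _ => by
    have h := ((hasDerivAt_id z).sub_const (X ω : ℂ)).pow 2 |>.neg.div_const 2 |>.cexp
    exact h.congr_deriv (by simp; ring)
  exact (hasDerivAt_integral_of_dominated_loc_of_deriv_le (ball_mem_nhds z₀ one_pos)
    (.of_forall hFmeas) hFint hF'meas hF'bound (integrable_const _) hderiv).2.differentiableAt

theorem norm_gaussianConv_le_of_norm_sub_ofReal_le [IsProbabilityMeasure μ] {z : ℂ} {x r : ℝ}
    (h : ‖z - x‖ ≤ r) : ‖gaussianConv μ X z‖ ≤ rexp (r ^ 2 / 2) := by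
  have him : |z.im| ≤ r := by
    simpa using (Complex.abs_im_le_norm (z - x)).trans h
  refine (norm_gaussianConv_le z).trans (exp_le_exp.2 ?_)
  nlinarith [sq_abs z.im, abs_nonneg z.im]

theorem integral_exp_neg_sub_sq_le [IsProbabilityMeasure μ] (hbd : ∀ᵐ ω ∂μ, |X ω| ≤ A)
    {u y : ℝ} (hu : 0 ≤ u) (hy : A + u ≤ |y|) :
    ∫ ω, rexp (-(y - X ω) ^ 2 / 2) ∂μ ≤ rexp (-u ^ 2 / 2) := by
  refine (integral_mono_of_nonneg (.of_forall fun _ => (exp_pos _).le)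
    (integrable_const (rexp (-u ^ 2 / 2))) ?_).trans_eq (by simp)
  filter_upwards [hbd] with ω hω
  apply exp_le_exp.2
  have : u ≤ |y - X ω| := by linarith [abs_sub_abs_le_abs_sub y (X ω)]
  nlinarith [sq_abs (y - X ω)]

end GaussianConvolution

section LevelSet

variable {Ω : Type*} [MeasurableSpace Ω] {μ : Measure Ω} [IsProbabilityMeasure μ] {X : Ω → ℝ}
  {A u ℓ : ℝ}

theorem card_le_of_subset_levelSet_ball (hX : Measurable X) (hbd : ∀ᵐ ω ∂μ, |X ω| ≤ A)
    (hu : 0 < u) (hℓ : 2 * rexp (-u ^ 2 / 2) ≤ ℓ) (hℓ1 : ℓ ≤ 1) {c₀ : ℝ} (hc₀ : A + u ≤ |c₀|)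
    {S : Finset ℝ} (hS : ∀ y ∈ S, ∫ ω, rexp (-(y - X ω) ^ 2 / 2) ∂μ = ℓ ∧ |y - c₀| ≤ A + u) :
    (S.card : ℝ) ≤ rexp 1 * (A + u) ^ 2 + 2 * Real.log (4 / ℓ) := by
  have hA : 0 ≤ A := let ⟨_, hω⟩ := hbd.exists; (abs_nonneg _).trans hω
  have hℓ0 : 0 < ℓ := (mul_pos two_pos (exp_pos _)).trans_le hℓ
  set R := rexp (1 / 2) * (A + u)
  set F : ℂ → ℂ := fun z => gaussianConv μ X z - ℓ
  have hFreal : ∀ y : ℝ, F y = ↑(∫ ω, rexp (-(y - X ω) ^ 2 / 2) ∂μ - ℓ) := fun y => by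
    simp [F, gaussianConv_ofReal]
  have hFc₀ : ℓ / 2 ≤ ‖F c₀‖ := by
    have := integral_exp_neg_sub_sq_le hbd hu.le hc₀
    rw [hFreal, Complex.norm_real, norm_eq_abs, abs_of_neg (by linarith)]
    linarith
  have hFc₀pos : 0 < ‖F c₀‖ := (half_pos hℓ0).trans_le hFc₀
  have hsphere : ∀ z : ℂ, ‖z - c₀‖ = R → ‖F z‖ ≤ 2 * rexp (R ^ 2 / 2) := fun z hz =>
    calc ‖F z‖ ≤ ‖gaussianConv μ X z‖ + ‖(ℓ : ℂ)‖ := norm_sub_le _ _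
      _ ≤ rexp (R ^ 2 / 2) + 1 := by
          gcongr
          · exact norm_gaussianConv_le_of_norm_sub_ofReal_le hz.le
          · rwa [Complex.norm_real, norm_eq_abs, abs_of_pos hℓ0]
      _ ≤ 2 * rexp (R ^ 2 / 2) := by linarith [one_le_exp (by positivity : 0 ≤ R ^ 2 / 2)]
  have hcount := (differentiable_gaussianConv hX hbd).sub_const (ℓ : ℂ) |>.card_le_two_mul_log
    (r := A + u) (by positivity) (norm_pos_iff.1 hFc₀pos) hsphere
    (S := S.image (↑)) fun a ha => by
      obtain ⟨y, hy, rfl⟩ := Finset.mem_image.1 ha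
      refine ⟨show F y = 0 by rw [hFreal, (hS y hy).1, sub_self, Complex.ofReal_zero], ?_⟩
      rw [← Complex.ofReal_sub, Complex.norm_real, norm_eq_abs]
      exact (hS y hy).2
  rw [Finset.card_image_of_injective _ Complex.ofReal_injective] at hcount
  calc (S.card : ℝ) ≤ 2 * Real.log (2 * rexp (R ^ 2 / 2) / ‖F c₀‖) := hcount
    _ ≤ 2 * Real.log (2 * rexp (R ^ 2 / 2) / (ℓ / 2)) := by gcongr
    _ = rexp 1 * (A + u) ^ 2 + 2 * Real.log (4 / ℓ) := by
        rw [show 2 * rexp (R ^ 2 / 2) / (ℓ / 2) = 4 / ℓ * rexp (R ^ 2 / 2) by field_simp; ring,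
          Real.log_mul (by positivity) (exp_pos _).ne', Real.log_exp, mul_pow, ← exp_nat_mul]
        norm_num
        ring

theorem card_le_of_subset_levelSet (hX : Measurable X) (hbd : ∀ᵐ ω ∂μ, |X ω| ≤ A)
    (hu : 0 < u) (hℓ : 2 * rexp (-u ^ 2 / 2) ≤ ℓ) (hℓ1 : ℓ ≤ 1) {S : Finset ℝ}
    (hS : ∀ y ∈ S, ∫ ω, rexp (-(y - X ω) ^ 2 / 2) ∂μ = ℓ) :
    (S.card : ℝ) ≤ 2 * rexp 1 * (A + u) ^ 2 + 4 * Real.log (4 / ℓ) := by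
  have hA : 0 ≤ A := let ⟨_, hω⟩ := hbd.exists; (abs_nonneg _).trans hω
  -- outside `[-(A + u), A + u]` the integral is at most `ℓ / 2`
  have hloc : ∀ y ∈ S, |y| ≤ A + u := fun y hy => by
    by_contra! h
    have := integral_exp_neg_sub_sq_le hbd hu.le h.le
    linarith [hS y hy, exp_pos (-u ^ 2 / 2)]
  have hpos := card_le_of_subset_levelSet_ball hX hbd hu hℓ hℓ1 (c₀ := A + u)
    (abs_of_pos (by linarith)).ge (S := S.filter (0 ≤ ·)) fun y hy => by
      rw [Finset.mem_filter] at hy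
      have := abs_le.1 (hloc y hy.1)
      exact ⟨hS y hy.1, abs_le.2 ⟨by linarith, by linarith⟩⟩
  have hneg := card_le_of_subset_levelSet_ball hX hbd hu hℓ hℓ1 (c₀ := -(A + u))
    (by rw [abs_neg, abs_of_pos (by linarith)]) (S := S.filter (¬ 0 ≤ ·)) fun y hy => by
      rw [Finset.mem_filter] at hy
      have := abs_le.1 (hloc y hy.1)
      exact ⟨hS y hy.1, abs_le.2 ⟨by linarith, by linarith⟩⟩
  have hsplit := congrArg (Nat.cast : ℕ → ℝ)
    (Finset.card_filter_add_card_filter_not (0 ≤ ·) (s := S))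
  push_cast at hsplit
  linarith

theorem card_le_of_subset_levelSet_of_exp_le (hX : Measurable X) (hbd : ∀ᵐ ω ∂μ, |X ω| ≤ A)
    {L : ℝ} (hL : 0 ≤ L) (hℓ : rexp (-((1 + L) / 2)) ≤ ℓ) (hℓ1 : ℓ ≤ 1) {S : Finset ℝ}
    (hS : ∀ y ∈ S, ∫ ω, rexp (-(y - X ω) ^ 2 / 2) ∂μ = ℓ) :
    (S.card : ℝ) ≤
      2 * rexp 1 * (A + √(1 + 2 * Real.log 2 + L)) ^ 2 + 8 * Real.log 2 + 2 + 2 * L := by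
  have hℓ0 : 0 < ℓ := (exp_pos _).trans_le hℓ
  -- `u` is chosen so that `2 * exp (-u ^ 2 / 2) = exp (-(1 + L) / 2)`
  set u := √(1 + 2 * Real.log 2 + L)
  have hu : 0 < u := sqrt_pos.2 (by linarith [Real.log_pos one_lt_two])
  have hℓu : 2 * rexp (-u ^ 2 / 2) ≤ ℓ := by
    rw [sq_sqrt (by positivity), show -(1 + 2 * Real.log 2 + L) / 2 = -((1 + L) / 2) + -Real.log 2
      by ring, exp_add, exp_neg (Real.log 2), exp_log two_pos]
    linarith
  have hlog : Real.log (4 / ℓ) ≤ Real.log (4 / rexp (-((1 + L) / 2))) :=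
    Real.log_le_log (by positivity) (div_le_div_of_nonneg_left (by norm_num) (exp_pos _) hℓ)
  rw [Real.log_div (by norm_num) (exp_pos _).ne', Real.log_exp, show (4 : ℝ) = 2 ^ 2 by norm_num,
    Real.log_pow] at hlog
  push_cast at hlog
  linarith [card_le_of_subset_levelSet hX hbd hu hℓu hℓ1 hS]

end LevelSet

theorem exp_neg_le_sqrt_two_pi_mul {A κ : ℝ}
    (hκ : 1 / √(2 * π * rexp 1 * (1 + A ^ 2)) ≤ κ) :
    rexp (-((1 + Real.log (1 + A ^ 2)) / 2)) ≤ √(2 * π) * κ :=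
  calc rexp (-((1 + Real.log (1 + A ^ 2)) / 2))
      = √(2 * π) * (1 / √(2 * π * rexp 1 * (1 + A ^ 2))) := by
        rw [exp_neg, exp_half, exp_add, exp_log (by positivity), mul_assoc _ (rexp 1),
          sqrt_mul (by positivity) (rexp 1 * _)]
        field_simp
    _ ≤ √(2 * π) * κ := by gcongr

theorem sqrt_two_pi_mul_le_one {κ : ℝ} (hκ : κ ≤ 1 / √(2 * π * rexp 1)) : √(2 * π) * κ ≤ 1 :=
  calc √(2 * π) * κ ≤ √(2 * π) * (1 / √(2 * π * rexp 1)) := by gcongr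
    _ = 1 / √(rexp 1) := by
        rw [sqrt_mul (by positivity) (rexp 1)]
        field_simp [(sqrt_pos.2 (by positivity : (0 : ℝ) < 2 * π)).ne']
    _ ≤ 1 := div_le_one_of_le₀ (one_le_sqrt.2 (one_le_exp zero_le_one)) (sqrt_nonneg _)

theorem two_mul_exp_one_mul_sq_add_le_quadratic {A : ℝ} (hA : 1 ≤ A) :
    2 * rexp 1 * (A + √(1 + 2 * Real.log 2 + Real.log (1 + A ^ 2))) ^ 2 + 8 * Real.log 2 + 2 +
      2 * Real.log (1 + A ^ 2) ≤
    (9 * Real.exp 1 + 6 * Real.sqrt (Real.exp 1) + 5) * A ^ 2 +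
      (6 * Real.exp 1 + 2 * Real.sqrt (Real.exp 1)) * A +
      (Real.exp 1 + 2 * Real.log (4 * Real.sqrt (Real.exp 1) + 2) + 1) - 1 := by
  set L := Real.log (1 + A ^ 2)
  set u := √(1 + 2 * Real.log 2 + L)
  have hL : 0 ≤ L := Real.log_nonneg (by nlinarith)
  have hu2 : u ^ 2 = 1 + 2 * Real.log 2 + L := sq_sqrt (by positivity)
  have hLA : L ≤ Real.log 2 + 2 * (A - 1) := by
    have h2A : Real.log (1 + A ^ 2) ≤ Real.log (2 * A ^ 2) :=
      Real.log_le_log (by positivity) (by nlinarith)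
    rw [Real.log_mul two_ne_zero (by positivity), Real.log_pow] at h2A
    push_cast at h2A
    linarith [Real.log_le_sub_one_of_pos (by linarith : 0 < A)]
  have hs : (1.64 : ℝ) ≤ √(rexp 1) :=
    (le_sqrt (by norm_num) (exp_pos 1).le).2 (by nlinarith [exp_one_gt_d9])
  have hlog : (2 : ℝ) ≤ Real.log (4 * √(rexp 1) + 2) := by
    rw [Real.le_log_iff_exp_le (by positivity), show (2 : ℝ) = 1 + 1 by norm_num, exp_add]
    nlinarith [exp_one_lt_d9, exp_pos 1]
  have he := exp_one_lt_d9
  have he0 := exp_pos 1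
  have hl2 := log_two_lt_d9
  clear_value L u
  generalize rexp 1 = e at *
  have h3 : u ^ 2 ≤ 2 * A + 1.0796 := by linarith
  have hA0 : 0 ≤ A - 1 := by linarith
  have heA : 0 ≤ e * A := by positivity
  linarith [mul_nonneg heA (sq_nonneg (u - 1)), mul_le_mul_of_nonneg_left h3 heA,
    mul_le_mul_of_nonneg_left h3 he0.le, mul_nonneg heA hA0, mul_nonneg he0.le hA0,
    mul_nonneg (mul_nonneg (sqrt_nonneg e) (by linarith : (0 : ℝ) ≤ A)) hA0,
    mul_nonneg (sqrt_nonneg e) hA0, mul_nonneg (by linarith : (0 : ℝ) ≤ A) hA0]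

theorem stmt_9_general {Ω : Type*} [MeasurableSpace Ω] (μ : Measure Ω) [IsProbabilityMeasure μ]
    (X : Ω → ℝ) (hXmeas : Measurable X) (A : ℝ) (hA : 1 ≤ A)
    (hbd : ∀ᵐ ω ∂μ, |X ω| ≤ A)
    (fY : ℝ → ℝ)
    (hfY : ∀ y : ℝ, fY y = (1 / Real.sqrt (2 * π)) * ∫ ω, Real.exp (-(y - X ω) ^ 2 / 2) ∂μ)
    (κ : ℝ)
    (hκlo : 1 / Real.sqrt (2 * π * Real.exp 1 * (1 + A ^ 2)) ≤ κ)
    (hκhi : κ ≤ 1 / Real.sqrt (2 * π * Real.exp 1)) :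
    {y : ℝ | fY y = κ}.Finite ∧
    ({y : ℝ | fY y = κ}.ncard : ℝ) ≤
      (9 * Real.exp 1 + 6 * Real.sqrt (Real.exp 1) + 5) * A ^ 2 +
      (6 * Real.exp 1 + 2 * Real.sqrt (Real.exp 1)) * A +
      (Real.exp 1 + 2 * Real.log (4 * Real.sqrt (Real.exp 1) + 2) + 1) - 1 := by
  have hπ : 0 < √(2 * π) := sqrt_pos.2 (by positivity)
  have hlevel : ∀ y, fY y = κ → ∫ ω, rexp (-(y - X ω) ^ 2 / 2) ∂μ = √(2 * π) * κ := by
    intro y hy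
    rwa [hfY, one_div, inv_mul_eq_iff_eq_mul₀ hπ.ne'] at hy
  obtain ⟨hfin, hcard⟩ := Set.finite_and_ncard_le_of_forall_finset fun S hS =>
    card_le_of_subset_levelSet_of_exp_le hXmeas hbd (Real.log_nonneg (by nlinarith))
      (exp_neg_le_sqrt_two_pi_mul hκlo) (sqrt_two_pi_mul_le_one hκhi) fun y hy => hlevel y (hS hy)
  exact ⟨hfin, hcard.trans (two_mul_exp_one_mul_sq_add_le_quadratic hA)⟩

/-- for `A ≥ 1`, zero-mean `X` with `|X| ≤ A` a.s., and
`(2πe(1+A²))^{−1/2} ≤ κ ≤ (2πe)^{−1/2}`, the number of real solutions of `f_Y(y) = κ`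
is finite and at most `a₂A² + a₁A + a₀ − 1` with `a₂ = 9e + 6√e + 5`, `a₁ = 6e + 2√e`,
`a₀ = e + 2 log(4√e + 2) + 1`. -/
theorem stmt_9 {Ω : Type*} [MeasurableSpace Ω] (μ : Measure Ω) [IsProbabilityMeasure μ]
    (X : Ω → ℝ) (hXmeas : Measurable X) (A : ℝ) (hA : 1 ≤ A)
    (hmean : ∫ ω, X ω ∂μ = 0)
    (hbd : ∀ᵐ ω ∂μ, |X ω| ≤ A)
    (fY : ℝ → ℝ)
    (hfY : ∀ y : ℝ, fY y = (1 / Real.sqrt (2 * π)) * ∫ ω, Real.exp (-(y - X ω) ^ 2 / 2) ∂μ)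
    (κ : ℝ)
    (hκlo : 1 / Real.sqrt (2 * π * Real.exp 1 * (1 + A ^ 2)) ≤ κ)
    (hκhi : κ ≤ 1 / Real.sqrt (2 * π * Real.exp 1)) :
    {y : ℝ | fY y = κ}.Finite ∧
    ({y : ℝ | fY y = κ}.ncard : ℝ) ≤
      (9 * Real.exp 1 + 6 * Real.sqrt (Real.exp 1) + 5) * A ^ 2 +
      (6 * Real.exp 1 + 2 * Real.sqrt (Real.exp 1)) * A +
      (Real.exp 1 + 2 * Real.log (4 * Real.sqrt (Real.exp 1) + 2) + 1) - 1 :=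
  stmt_9_general μ X hXmeas A hA hbd fY hfY κ hκlo hκhi
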